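/- arXiv:1402.1557 — 5 statements merged into one kernel-verified Lean document; each statement's English description precedes it below -/
import Mathlib

section
/- For every W ≥ 0, every integer k ≥ 1 and all 0 < a₁ ≤ a₂: P((ξ_i^{(a₁)})^{−1} > θ(I_i^{(a₁)} + W) for all 1 ≤ i ≤ k) ≤ P((ξ_i^{(a₂)})^{−1} > θ(I_i^{(a₂)} + W) for all 1 ≤ i ≤ k); that is, the probability p_k^W of successively decoding at least k users in the presence of noise power W is monotonically nondecreasing in the intensity coefficient a. -/
/-!
The event grows with `a` for every fixed `ω`. For `a > 0`,
`(ξᵃ_j)⁻¹ = a^(1/β) · (T_j^(1/β))⁻¹`, so both the signal `(ξᵃ_i)⁻¹` and the interference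
`Iᵃ_i` scale by the same factor `c = a^(1/β)`, which is nondecreasing in `a`. The decoding
condition `θ (c S + W) < c u` reads `θ W < c (u - θ S)`; when it holds for `c₁ ≥ 0`, the bracket is
positive, so it persists for every `c₂ ≥ c₁`.
-/

open MeasureTheory ProbabilityTheory Real

-- `Real.div_rpow` asks for `0 ≤ x`; for a negative base both sides pick up the same `cos (y π)`.
theorem Real.div_rpow_of_pos_right (x : ℝ) {a : ℝ} (ha : 0 < a) (y : ℝ) :
    (x / a) ^ y = x ^ y / a ^ y := by
  rcases lt_or_ge x 0 with hx | hx
  · rw [rpow_def_of_neg hx, rpow_def_of_neg (div_neg_of_neg_of_pos hx ha),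
      rpow_def_of_pos ha, log_div hx.ne ha.ne', sub_mul, exp_sub]
    ring
  · exact div_rpow hx ha.le y

theorem Real.inv_div_rpow_of_pos_right (x : ℝ) {a : ℝ} (ha : 0 < a) (y : ℝ) :
    ((x / a) ^ y)⁻¹ = a ^ y * (x ^ y)⁻¹ := by
  rw [div_rpow_of_pos_right x ha, inv_div, div_eq_mul_inv]

theorem mul_tsum_add_lt_mul_of_le {c₁ c₂ θ W u : ℝ} {g : ℕ → ℝ} (hc₁ : 0 ≤ c₁) (hc : c₁ ≤ c₂)
    (hθW : 0 ≤ θ * W) (h : θ * (∑' j, c₁ * g j + W) < c₁ * u) :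
    θ * (∑' j, c₂ * g j + W) < c₂ * u := by
  rw [tsum_mul_left] at h ⊢
  have hmargin : 0 < u - θ * ∑' j, g j := by
    by_contra! hneg
    nlinarith [mul_nonpos_of_nonneg_of_nonpos hc₁ hneg]
  nlinarith [mul_le_mul_of_nonneg_right hc hmargin.le]

theorem sic_scale_monotonicity_general
    {Ω : Type*} [MeasureSpace Ω]
    (β θ : ℝ) (hβ : β ∈ Set.Ioo (0:ℝ) 1) (hθ : 0 < θ)
    (E : ℕ → Ω → ℝ)
    -- for each intensity coefficient a > 0, ξᵃ k = (T k / a)^(1/β)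
    (ξ : ℝ → ℕ → Ω → ℝ)
    (hξ : ∀ a k ω, ξ a k ω = ((∑ i ∈ Finset.range k, E i ω) / a) ^ (1/β : ℝ))
    (I : ℝ → ℕ → Ω → ℝ) (hI : ∀ a k ω, I a k ω = ∑' j : ℕ, (ξ a (k + 1 + j) ω)⁻¹)
    (W : ℝ) (hW : 0 ≤ W)
    (k : ℕ)
    (a₁ a₂ : ℝ) (ha₁ : 0 < a₁) (ha₁₂ : a₁ ≤ a₂) :
    ℙ {ω | ∀ i, 1 ≤ i → i ≤ k → θ * (I a₁ i ω + W) < (ξ a₁ i ω)⁻¹}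
      ≤ ℙ {ω | ∀ i, 1 ≤ i → i ≤ k → θ * (I a₂ i ω + W) < (ξ a₂ i ω)⁻¹} := by
  have ha₂ : 0 < a₂ := ha₁.trans_le ha₁₂
  have hp : 0 ≤ 1 / β := one_div_nonneg.2 hβ.1.le
  refine measure_mono fun ω hω i hi hik => ?_
  have hdec := hω i hi hik
  simp only [hI, hξ, inv_div_rpow_of_pos_right _ ha₁, inv_div_rpow_of_pos_right _ ha₂] at hdec ⊢
  exact mul_tsum_add_lt_mul_of_le (rpow_nonneg ha₁.le _) (rpow_le_rpow ha₁.le ha₁₂ hp)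
    (mul_nonneg hθ.le hW) hdec

/-- Scale-monotonicity: for noise power `W ≥ 0` and intensity
coefficients `0 < a₁ ≤ a₂`, the probability of successively decoding at least `k`
users is nondecreasing in the intensity coefficient. -/
theorem sic_scale_monotonicity
    {Ω : Type*} [MeasureSpace Ω] [IsProbabilityMeasure (ℙ : Measure Ω)]
    (β θ : ℝ) (hβ : β ∈ Set.Ioo (0:ℝ) 1) (hθ : 0 < θ)
    (E : ℕ → Ω → ℝ) (hEmeas : ∀ i, Measurable (E i))
    (hEindep : iIndepFun E ℙ)
    (hEdist : ∀ i, ∀ x : ℝ, 0 ≤ x → ℙ {ω | x < E i ω} = ENNReal.ofReal (Real.exp (-x)))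
    -- for each intensity coefficient a > 0, ξᵃ k = (T k / a)^(1/β)
    (ξ : ℝ → ℕ → Ω → ℝ)
    (hξ : ∀ a k ω, ξ a k ω = ((∑ i ∈ Finset.range k, E i ω) / a) ^ (1/β : ℝ))
    (I : ℝ → ℕ → Ω → ℝ) (hI : ∀ a k ω, I a k ω = ∑' j : ℕ, (ξ a (k + 1 + j) ω)⁻¹)
    (W : ℝ) (hW : 0 ≤ W)
    (k : ℕ) (hk : 1 ≤ k)
    (a₁ a₂ : ℝ) (ha₁ : 0 < a₁) (ha₁₂ : a₁ ≤ a₂) :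
    ℙ {ω | ∀ i, 1 ≤ i → i ≤ k → θ * (I a₁ i ω + W) < (ξ a₁ i ω)⁻¹}
      ≤ ℙ {ω | ∀ i, 1 ≤ i → i ≤ k → θ * (I a₂ i ω + W) < (ξ a₂ i ω)⁻¹} :=
  sic_scale_monotonicity_general β θ hβ hθ E ξ hξ I hI W hW k a₁ a₂ ha₁ ha₁₂
end

section
/- The aggregate throughput R(θ) = log(1+θ) · Σ_{k=1}^∞ p_k(θ) satisfies limsup_{θ → 0⁺} R(θ) ≤ 1/β − 1. -/
open MeasureTheory ProbabilityTheory Real Filter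

/-!
Write `s = 1/β > 1`, `T_k = E_1 + ⋯ + E_k` (so `ξ_k = T_k ^ s`) and `D_η = ((1+η)/(1-η))^s`.
If `T_j` lies within `(1 ± η) j` for all `j ≥ m`, comparing `∑_{j>m} T_j^(-s)` with
`∫_{m+1}^∞ x^(-s) dx` shows `θ I_m ≥ ξ_m⁻¹` as soon as `θ (m + 1 - s) ≥ (s - 1) D_η`. Hence
`p_k(θ) ≤ 1` for the first `≈ (s - 1) D_η / θ` indices, and beyond them `p_k(θ)` is at most the
probability that this concentration fails from `k + 1` on. Chernoff bounds for sums of exponentials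
make these probabilities geometrically small, so their sum `C_η` is finite and
`R(θ) ≤ θ ((s - 1) D_η / θ + O(1) + C_η) → (s - 1) D_η` as `θ → 0⁺`; finally `D_η → 1` as `η → 0`.
-/

open Set Topology
open scoped ENNReal

lemma add_one_sub_le_rpow_mul_rpow_add_one {s x : ℝ} (hs : 1 ≤ s) (hx : 0 < x) :
    x + 1 - s ≤ x ^ s * (x + 1) ^ (1 - s) := by
  have hx1 : 0 < x + 1 := by linarith
  have hbern : 1 + s * -(x + 1)⁻¹ ≤ (1 + -(x + 1)⁻¹) ^ s :=
    one_add_mul_self_le_rpow_one_add (by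
      have : (x + 1)⁻¹ ≤ 1 := inv_le_one_of_one_le₀ (by linarith)
      linarith) hs
  have hsplit : x ^ s * (x + 1) ^ (1 - s) = (x + 1) * (x / (x + 1)) ^ s := by
    rw [div_rpow hx.le hx1.le, rpow_sub hx1, rpow_one]
    field_simp
  rw [show 1 + -(x + 1)⁻¹ = x / (x + 1) by field_simp; ring] at hbern
  rw [hsplit]
  calc x + 1 - s = (x + 1) * (1 + s * -(x + 1)⁻¹) := by field_simp; ring
    _ ≤ (x + 1) * (x / (x + 1)) ^ s := mul_le_mul_of_nonneg_left hbern hx1.le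

lemma rpow_one_sub_sub_rpow_one_sub_le {s x : ℝ} (hs : 1 ≤ s) (hx : 0 < x) :
    x ^ (1 - s) - (x + 1) ^ (1 - s) ≤ (s - 1) * x ^ (-s) := by
  have hxs : 0 < x ^ s := rpow_pos_of_pos hx s
  have h := add_one_sub_le_rpow_mul_rpow_add_one hs hx
  rw [rpow_sub hx, rpow_one, rpow_neg hx.le]
  rw [← sub_nonneg] at h ⊢
  have : 0 ≤ (x ^ s * (x + 1) ^ (1 - s) - (x + 1 - s)) * (x ^ s)⁻¹ :=
    mul_nonneg h (inv_nonneg.mpr hxs.le)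
  convert this using 1
  field_simp
  ring

lemma summable_nat_add_rpow_neg {s : ℝ} (hs : 1 < s) (n : ℕ) :
    Summable fun j : ℕ => ((n + j : ℕ) : ℝ) ^ (-s) := by
  have := (summable_nat_add_iff n).mpr (Real.summable_nat_rpow.mpr (by linarith : -s < -1))
  simpa [add_comm] using this

lemma rpow_one_sub_div_le_tsum_rpow_neg {s : ℝ} (hs : 1 < s) {n : ℕ} (hn : 0 < n) :
    (n : ℝ) ^ (1 - s) / (s - 1) ≤ ∑' j : ℕ, ((n + j : ℕ) : ℝ) ^ (-s) := by
  have hs1 : 0 < s - 1 := by linarith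
  have hsum := summable_nat_add_rpow_neg hs n
  have hpartial : ∀ N : ℕ, (n : ℝ) ^ (1 - s) - ((n + N : ℕ) : ℝ) ^ (1 - s)
      ≤ (s - 1) * ∑' j : ℕ, ((n + j : ℕ) : ℝ) ^ (-s) := by
    intro N
    calc (n : ℝ) ^ (1 - s) - ((n + N : ℕ) : ℝ) ^ (1 - s)
        = ∑ j ∈ Finset.range N,
            (((n + j : ℕ) : ℝ) ^ (1 - s) - ((n + (j + 1) : ℕ) : ℝ) ^ (1 - s)) := by
          rw [Finset.sum_range_sub' (fun j => ((n + j : ℕ) : ℝ) ^ (1 - s)) N, add_zero]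
      _ ≤ ∑ j ∈ Finset.range N, (s - 1) * ((n + j : ℕ) : ℝ) ^ (-s) := by
          refine Finset.sum_le_sum fun j _ => ?_
          have := rpow_one_sub_sub_rpow_one_sub_le hs.le
            (show (0 : ℝ) < ((n + j : ℕ) : ℝ) by positivity)
          simpa [add_assoc] using this
      _ ≤ (s - 1) * ∑' j : ℕ, ((n + j : ℕ) : ℝ) ^ (-s) := by
          rw [← Finset.mul_sum]
          exact mul_le_mul_of_nonneg_left
            (hsum.sum_le_tsum _ fun j _ => by positivity) hs1.le
  have hlim : Tendsto (fun N : ℕ => (n : ℝ) ^ (1 - s) - ((n + N : ℕ) : ℝ) ^ (1 - s)) atTop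
      (𝓝 ((n : ℝ) ^ (1 - s))) := by
    have h0 : Tendsto (fun N : ℕ => ((n + N : ℕ) : ℝ) ^ (1 - s)) atTop (𝓝 0) := by
      have := (tendsto_rpow_neg_atTop hs1).comp (tendsto_natCast_atTop_atTop.comp
        (tendsto_add_atTop_nat n))
      simpa [Function.comp_def, add_comm] using this
    simpa using tendsto_const_nhds.sub h0
  rw [div_le_iff₀' hs1]
  exact le_of_tendsto' hlim hpartial

lemma mul_exp_one_sub_lt_one {a : ℝ} (ha : a ≠ 1) : a * exp (1 - a) < 1 :=
  calc a * exp (1 - a) < exp (a - 1) * exp (1 - a) :=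
        mul_lt_mul_of_pos_right (by linarith [add_one_lt_exp (sub_ne_zero.mpr ha)]) (exp_pos _)
    _ = 1 := by rw [← exp_add]; simp

lemma ENNReal.tsum_tsum_pow_add_lt_top {ρ : ℝ≥0∞} (hρ : ρ < 1) :
    ∑' m, ∑' j, ρ ^ (m + j) < ∞ := by
  simp_rw [pow_add, ENNReal.tsum_mul_left, ENNReal.tsum_mul_right]
  exact ENNReal.mul_lt_top (tsum_geometric_lt_top.2 hρ) (tsum_geometric_lt_top.2 hρ)

def NearLinearFrom (η : ℝ) (m : ℕ) (T : ℕ → ℝ) : Prop :=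
  ∀ j, m ≤ j → (1 - η) * j ≤ T j ∧ T j ≤ (1 + η) * j

namespace NearLinearFrom

variable {η s : ℝ} {m j : ℕ} {T : ℕ → ℝ}

lemma pos (hT : NearLinearFrom η m T) (hη : η < 1) (hj : m ≤ j) (hj0 : 0 < j) : 0 < T j :=
  lt_of_lt_of_le (mul_pos (by linarith) (by exact_mod_cast hj0)) (hT j hj).1

lemma rpow_neg_le (hT : NearLinearFrom η m T) (hη : η < 1) (hs : 0 ≤ s) (hj : m ≤ j)
    (hj0 : 0 < j) : T j ^ (-s) ≤ (1 - η) ^ (-s) * (j : ℝ) ^ (-s) := by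
  rw [← mul_rpow (by linarith) (Nat.cast_nonneg j)]
  exact rpow_le_rpow_of_nonpos (mul_pos (by linarith) (by exact_mod_cast hj0)) (hT j hj).1
    (by linarith)

lemma le_rpow_neg (hT : NearLinearFrom η m T) (hη₀ : 0 ≤ η) (hη₁ : η < 1) (hs : 0 ≤ s)
    (hj : m ≤ j) (hj0 : 0 < j) : (1 + η) ^ (-s) * (j : ℝ) ^ (-s) ≤ T j ^ (-s) := by
  rw [← mul_rpow (by linarith) (Nat.cast_nonneg j)]
  exact rpow_le_rpow_of_nonpos (hT.pos hη₁ hj hj0) (hT j hj).2 (by linarith)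

lemma le_tsum_rpow_neg (hT : NearLinearFrom η m T) (hη₀ : 0 ≤ η) (hη₁ : η < 1) (hs : 1 < s) :
    (1 + η) ^ (-s) * (((m + 1 : ℕ) : ℝ) ^ (1 - s) / (s - 1))
      ≤ ∑' j, T (m + 1 + j) ^ (-s) := by
  have hsum := summable_nat_add_rpow_neg hs (m + 1)
  have hsumT : Summable fun j => T (m + 1 + j) ^ (-s) :=
    (hsum.mul_left ((1 - η) ^ (-s))).of_nonneg_of_le
      (fun j => (rpow_pos_of_pos (hT.pos hη₁ (by omega) (by omega)) _).le)
      (fun j => hT.rpow_neg_le hη₁ (by linarith) (by omega) (by omega))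
  calc _ ≤ (1 + η) ^ (-s) * ∑' j : ℕ, ((m + 1 + j : ℕ) : ℝ) ^ (-s) :=
        mul_le_mul_of_nonneg_left (rpow_one_sub_div_le_tsum_rpow_neg hs m.succ_pos)
          (by positivity)
    _ ≤ ∑' j, T (m + 1 + j) ^ (-s) := by
        rw [← tsum_mul_left]
        exact (hsum.mul_left _).tsum_le_tsum
          (fun j => hT.le_rpow_neg hη₀ hη₁ (by linarith) (by omega) (by omega)) hsumT

end NearLinearFrom

lemma one_sub_rpow_neg_mul_le {s η θ x : ℝ} (hs : 1 < s) (hη₀ : 0 ≤ η) (hη₁ : η < 1)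
    (hθ : 0 < θ) (hx : 0 < x) (h : (s - 1) * ((1 + η) / (1 - η)) ^ s ≤ θ * (x + 1 - s)) :
    (1 - η) ^ (-s) * x ^ (-s) ≤ θ * ((1 + η) ^ (-s) * ((x + 1) ^ (1 - s) / (s - 1))) := by
  have hs1 : 0 < s - 1 := by linarith
  have ha : 0 < (1 - η) ^ s := rpow_pos_of_pos (by linarith) s
  have hb : 0 < (1 + η) ^ s := rpow_pos_of_pos (by linarith) s
  have hxs : 0 < x ^ s := rpow_pos_of_pos hx s
  have hy : 0 < (x + 1) ^ (1 - s) := rpow_pos_of_pos (by linarith) _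
  have key : (s - 1) * (1 + η) ^ s ≤ θ * (1 - η) ^ s * (x ^ s * (x + 1) ^ (1 - s)) := by
    rw [div_rpow (by linarith) (by linarith), mul_div_assoc', div_le_iff₀ ha] at h
    nlinarith [mul_le_mul_of_nonneg_left (add_one_sub_le_rpow_mul_rpow_add_one hs.le hx)
      (by positivity : (0 : ℝ) ≤ θ * (1 - η) ^ s)]
  simp only [rpow_neg (by linarith : (0 : ℝ) ≤ 1 + η), rpow_neg (by linarith : (0 : ℝ) ≤ 1 - η),
    rpow_neg hx.le]
  rw [← mul_inv, inv_eq_one_div, show θ * (((1 + η) ^ s)⁻¹ * ((x + 1) ^ (1 - s) / (s - 1)))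
    = θ * (x + 1) ^ (1 - s) / ((1 + η) ^ s * (s - 1)) by field_simp,
    div_le_div_iff₀ (by positivity) (by positivity)]
  nlinarith

lemma inv_rpow_le_mul_tsum_inv_rpow {s η θ : ℝ} (hs : 1 < s) (hη₀ : 0 ≤ η) (hη₁ : η < 1)
    (hθ : 0 < θ) {T : ℕ → ℝ} {m : ℕ} (hT : NearLinearFrom η m T)
    (hm : (s - 1) * ((1 + η) / (1 - η)) ^ s ≤ θ * (m + 1 - s)) :
    (T m ^ s)⁻¹ ≤ θ * ∑' j, (T (m + 1 + j) ^ s)⁻¹ := by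
  have hm0 : 0 < m := by
    have hD : 0 < (s - 1) * ((1 + η) / (1 - η)) ^ s :=
      mul_pos (by linarith) (rpow_pos_of_pos (div_pos (by linarith) (by linarith)) s)
    have : (0 : ℝ) < m + 1 - s := pos_of_mul_pos_right (hD.trans_le hm) hθ.le
    exact_mod_cast (show (0 : ℝ) < m by linarith)
  rw [tsum_congr fun j => (rpow_neg (hT.pos hη₁ (by omega) (by omega)).le s).symm,
    ← rpow_neg (hT.pos hη₁ le_rfl hm0).le]
  calc T m ^ (-s) ≤ (1 - η) ^ (-s) * (m : ℝ) ^ (-s) :=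
        hT.rpow_neg_le hη₁ (by linarith) le_rfl hm0
    _ ≤ θ * ((1 + η) ^ (-s) * (((m + 1 : ℕ) : ℝ) ^ (1 - s) / (s - 1))) := by
        push_cast
        exact one_sub_rpow_neg_mul_le hs hη₀ hη₁ hθ (by exact_mod_cast hm0) hm
    _ ≤ θ * ∑' j, T (m + 1 + j) ^ (-s) :=
        mul_le_mul_of_nonneg_left (hT.le_tsum_rpow_neg hη₀ hη₁ hs) hθ.le

lemma exponentialPDF_toReal_mul_exp {r : ℝ} (hr : 0 < r) (t x : ℝ) :
    (exponentialPDF r x).toReal * exp (t * x)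
      = (Ici 0).indicator (fun x => r * exp ((t - r) * x)) x := by
  rcases le_or_gt 0 x with hx | hx
  · rw [exponentialPDF_eq, if_pos hx, indicator_of_mem (mem_Ici.mpr hx),
      ENNReal.toReal_ofReal (by positivity), mul_assoc, ← exp_add]
    ring_nf
  · rw [exponentialPDF_eq, if_neg hx.not_ge, indicator_of_notMem (by simpa using hx)]
    simp

lemma measurable_exponentialPDF (r : ℝ) : Measurable (exponentialPDF r) :=
  (measurable_exponentialPDFReal r).ennreal_ofReal

lemma expMeasure_eq_withDensity (r : ℝ) :
    expMeasure r = volume.withDensity (exponentialPDF r) :=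
  rfl

lemma integrable_exp_mul_expMeasure {r t : ℝ} (hr : 0 < r) (ht : t < r) :
    Integrable (fun x => exp (t * x)) (expMeasure r) := by
  rw [expMeasure_eq_withDensity, integrable_withDensity_iff_integrable_smul'
    (measurable_exponentialPDF r) (ae_of_all _ fun _ => ENNReal.ofReal_lt_top)]
  simp_rw [smul_eq_mul, exponentialPDF_toReal_mul_exp hr]
  rw [integrable_indicator_iff measurableSet_Ici, integrableOn_Ici_iff_integrableOn_Ioi]
  exact (integrableOn_exp_mul_Ioi (by linarith) 0).const_mul r

lemma integral_exp_mul_expMeasure {r t : ℝ} (hr : 0 < r) (ht : t < r) :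
    ∫ x, exp (t * x) ∂expMeasure r = r / (r - t) := by
  rw [expMeasure_eq_withDensity, integral_withDensity_eq_integral_toReal_smul
    (measurable_exponentialPDF r) (ae_of_all _ fun _ => ENNReal.ofReal_lt_top)]
  simp_rw [smul_eq_mul, exponentialPDF_toReal_mul_exp hr, integral_indicator measurableSet_Ici,
    integral_Ici_eq_integral_Ioi, integral_const_mul,
    integral_exp_mul_Ioi (by linarith : t - r < 0)]
  rw [mul_zero, exp_zero, neg_div, ← div_neg, neg_sub, mul_one_div]

section Probability

variable {Ω : Type*} {mΩ : MeasurableSpace Ω} {μ : Measure Ω}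

lemma hasLaw_expMeasure_one_of_tail [IsProbabilityMeasure μ] {X : Ω → ℝ} (hX : Measurable X)
    (htail : ∀ x, 0 ≤ x → μ {ω | x < X ω} = ENNReal.ofReal (exp (-x))) :
    HasLaw X (expMeasure 1) μ where
  aemeasurable := hX.aemeasurable
  map_eq := by
    have : IsProbabilityMeasure (expMeasure 1) := isProbabilityMeasure_expMeasure one_pos
    have : IsProbabilityMeasure (μ.map X) := Measure.isProbabilityMeasure_map hX.aemeasurable
    refine Measure.ext_of_Iic _ _ fun a => ?_
    rw [Measure.map_apply hX measurableSet_Iic, ← ofReal_cdf, cdf_expMeasure_eq one_pos]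
    have hcompl : X ⁻¹' Iic a = {ω | a < X ω}ᶜ := by ext; simp
    rcases le_or_gt 0 a with ha | ha
    · rw [if_pos ha, hcompl, prob_compl_eq_one_sub (measurableSet_lt measurable_const hX),
        htail a ha, ENNReal.ofReal_sub _ (exp_nonneg _), ENNReal.ofReal_one, one_mul]
    · rw [if_neg ha.not_ge, ENNReal.ofReal_zero, ← nonpos_iff_eq_zero]
      calc μ (X ⁻¹' Iic a) ≤ μ {ω | 0 < X ω}ᶜ :=
            measure_mono fun ω (hω : X ω ≤ a) => by
              simp only [mem_compl_iff, mem_ofPred_eq]; linarith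
        _ = 0 := by
            rw [prob_compl_eq_one_sub (measurableSet_lt measurable_const hX), htail 0 le_rfl]
            simp

lemma ProbabilityTheory.HasLaw.integrable_exp_mul_of_expMeasure {X : Ω → ℝ} {r t : ℝ}
    (hX : HasLaw X (expMeasure r) μ) (hr : 0 < r) (ht : t < r) :
    Integrable (fun ω => exp (t * X ω)) μ := by
  have := integrable_exp_mul_expMeasure hr ht
  rw [← hX.map_eq] at this
  exact this.comp_aemeasurable hX.aemeasurable

lemma ProbabilityTheory.HasLaw.mgf_of_expMeasure {X : Ω → ℝ} {r t : ℝ}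
    (hX : HasLaw X (expMeasure r) μ) (hr : 0 < r) (ht : t < r) : mgf X μ t = r / (r - t) := by
  rw [mgf, ← integral_exp_mul_expMeasure hr ht]
  exact hX.integral_comp (f := fun x => exp (t * x)) (by fun_prop)

section IidExponential

variable {E : ℕ → Ω → ℝ}

-- `t = 1 - 1/a` is the optimal Chernoff parameter for the threshold `a n`
lemma exp_neg_mul_mgf_sum_range_eq (hindep : iIndepFun E μ)
    (hlaw : ∀ i, HasLaw (E i) (expMeasure 1) μ) {a : ℝ} (ha : 0 < a) (n : ℕ) :
    exp (-(1 - a⁻¹) * (a * n)) * mgf (∑ i ∈ Finset.range n, E i) μ (1 - a⁻¹)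
      = (a * exp (1 - a)) ^ n := by
  have ht : 1 - a⁻¹ < 1 := by have := inv_pos.mpr ha; linarith
  rw [hindep.mgf_sum₀ (fun i => (hlaw i).aemeasurable),
    Finset.prod_congr rfl fun i _ => (hlaw i).mgf_of_expMeasure one_pos ht, Finset.prod_const,
    Finset.card_range, mul_pow, ← exp_nat_mul]
  field_simp
  ring_nf

lemma measure_sum_range_le_le (hmeas : ∀ i, Measurable (E i)) (hindep : iIndepFun E μ)
    (hlaw : ∀ i, HasLaw (E i) (expMeasure 1) μ) {a : ℝ} (ha₀ : 0 < a) (ha₁ : a ≤ 1) (n : ℕ) :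
    μ {ω | ∑ i ∈ Finset.range n, E i ω ≤ a * n} ≤ ENNReal.ofReal (a * exp (1 - a)) ^ n := by
  have := hindep.isProbabilityMeasure
  have ht : 1 - a⁻¹ ≤ 0 := by have := one_le_inv_iff₀.mpr ⟨ha₀, ha₁⟩; linarith
  have h := measure_le_le_exp_mul_mgf (X := ∑ i ∈ Finset.range n, E i) (a * n) ht
    (hindep.integrable_exp_mul_sum hmeas
      fun i _ => (hlaw i).integrable_exp_mul_of_expMeasure one_pos (by linarith))
  rw [exp_neg_mul_mgf_sum_range_eq hindep hlaw ha₀] at h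
  rw [← ENNReal.ofReal_pow (by positivity),
    ENNReal.le_ofReal_iff_toReal_le (measure_ne_top _ _) (by positivity)]
  simpa [measureReal_def] using h

lemma measure_le_sum_range_le (hmeas : ∀ i, Measurable (E i)) (hindep : iIndepFun E μ)
    (hlaw : ∀ i, HasLaw (E i) (expMeasure 1) μ) {a : ℝ} (ha : 1 ≤ a) (n : ℕ) :
    μ {ω | a * n ≤ ∑ i ∈ Finset.range n, E i ω} ≤ ENNReal.ofReal (a * exp (1 - a)) ^ n := by
  have := hindep.isProbabilityMeasure
  have ha₀ : 0 < a := by linarith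
  have ht : 0 ≤ 1 - a⁻¹ := by have := inv_le_one_of_one_le₀ ha; linarith
  have h := measure_ge_le_exp_mul_mgf (X := ∑ i ∈ Finset.range n, E i) (a * n) ht
    (hindep.integrable_exp_mul_sum hmeas fun i _ =>
      (hlaw i).integrable_exp_mul_of_expMeasure one_pos (by linarith [inv_pos.mpr ha₀]))
  rw [exp_neg_mul_mgf_sum_range_eq hindep hlaw ha₀] at h
  rw [← ENNReal.ofReal_pow (by positivity),
    ENNReal.le_ofReal_iff_toReal_le (measure_ne_top _ _) (by positivity)]
  simpa [measureReal_def] using h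

lemma measure_not_nearLinearFrom_le (hmeas : ∀ i, Measurable (E i)) (hindep : iIndepFun E μ)
    (hlaw : ∀ i, HasLaw (E i) (expMeasure 1) μ) {η : ℝ} (hη₀ : 0 < η) (hη₁ : η < 1) (m : ℕ) :
    μ {ω | ¬ NearLinearFrom η m (fun j => ∑ i ∈ Finset.range j, E i ω)}
      ≤ ∑' j, (ENNReal.ofReal ((1 - η) * exp (1 - (1 - η))) ^ (m + j)
        + ENNReal.ofReal ((1 + η) * exp (1 - (1 + η))) ^ (m + j)) := by
  calc _ ≤ μ (⋃ j : ℕ, {ω | ∑ i ∈ Finset.range (m + j), E i ω ≤ (1 - η) * (m + j : ℕ)}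
          ∪ {ω | (1 + η) * (m + j : ℕ) ≤ ∑ i ∈ Finset.range (m + j), E i ω}) := by
        refine measure_mono fun ω hω => ?_
        simp only [NearLinearFrom, mem_ofPred_eq, not_forall, not_and_or, not_le] at hω
        obtain ⟨j, hj, hlt | hlt⟩ := hω
        all_goals refine mem_iUnion.mpr ⟨j - m, ?_⟩
        all_goals rw [Nat.add_sub_cancel' hj]
        exacts [Or.inl hlt.le, Or.inr hlt.le]
    _ ≤ _ := (measure_iUnion_le _).trans <| ENNReal.tsum_le_tsum fun j =>
        (measure_union_le _ _).trans <| add_le_add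
          (measure_sum_range_le_le hmeas hindep hlaw (by linarith) (by linarith) _)
          (measure_le_sum_range_le hmeas hindep hlaw (by linarith) _)

lemma tsum_measure_not_nearLinearFrom_lt_top (hmeas : ∀ i, Measurable (E i))
    (hindep : iIndepFun E μ) (hlaw : ∀ i, HasLaw (E i) (expMeasure 1) μ) {η : ℝ}
    (hη₀ : 0 < η) (hη₁ : η < 1) :
    ∑' m, μ {ω | ¬ NearLinearFrom η m (fun j => ∑ i ∈ Finset.range j, E i ω)} < ∞ := by
  refine (ENNReal.tsum_le_tsum
    (measure_not_nearLinearFrom_le hmeas hindep hlaw hη₀ hη₁)).trans_lt ?_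
  simp_rw [ENNReal.tsum_add]
  exact ENNReal.add_lt_top.2
    ⟨ENNReal.tsum_tsum_pow_add_lt_top
        (ENNReal.ofReal_lt_one.2 (mul_exp_one_sub_lt_one (by linarith))),
      ENNReal.tsum_tsum_pow_add_lt_top
        (ENNReal.ofReal_lt_one.2 (mul_exp_one_sub_lt_one (by linarith)))⟩

end IidExponential

variable [IsProbabilityMeasure μ]

lemma tsum_measure_le_add_tsum_of_subset {A B : ℕ → Set Ω} {M : ℕ}
    (h : ∀ k, M ≤ k → A k ⊆ B k) : ∑' k, μ (A k) ≤ M + ∑' k, μ (B k) := by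
  rw [← ENNReal.summable.sum_add_tsum_nat_add' (f := fun k => μ (A k)) (k := M)]
  refine add_le_add ?_ ?_
  · calc ∑ k ∈ Finset.range M, μ (A k) ≤ ∑ _k ∈ Finset.range M, 1 :=
          Finset.sum_le_sum fun _ _ => prob_le_one
      _ = M := by simp
  · calc ∑' k, μ (A (k + M)) ≤ ∑' k, μ (B (k + M)) :=
          ENNReal.tsum_le_tsum fun k => measure_mono (h _ (by omega))
      _ ≤ ∑' k, μ (B k) := ENNReal.tsum_comp_le_tsum_of_injective (add_left_injective M) _

lemma tsum_measure_decodable_le {T : ℕ → Ω → ℝ} {s η θ : ℝ} (hs : 1 < s) (hη₀ : 0 ≤ η)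
    (hη₁ : η < 1) (hθ : 0 < θ) :
    ∑' k : ℕ, μ {ω | ∀ i, 1 ≤ i → i ≤ k + 1 → θ * ∑' j, (T (i + 1 + j) ω ^ s)⁻¹ < (T i ω ^ s)⁻¹}
      ≤ ⌈(s - 1) * ((1 + η) / (1 - η)) ^ s / θ + s⌉₊
        + ∑' m, μ {ω | ¬ NearLinearFrom η m (T · ω)} := by
  calc _ ≤ ⌈(s - 1) * ((1 + η) / (1 - η)) ^ s / θ + s⌉₊
        + ∑' k, μ {ω | ¬ NearLinearFrom η (k + 1) (T · ω)} := by
        refine tsum_measure_le_add_tsum_of_subset fun k hk ω hω hnear => ?_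
        refine (hω (k + 1) le_add_self le_rfl).not_ge
          (inv_rpow_le_mul_tsum_inv_rpow hs hη₀ hη₁ hθ hnear ?_)
        have hM := le_sub_iff_add_le.mpr (Nat.ceil_le.mp hk)
        rw [div_le_iff₀ hθ] at hM
        push_cast
        nlinarith
    _ ≤ _ := add_le_add_right (ENNReal.tsum_comp_le_tsum_of_injective (add_left_injective 1) _) _

end Probability

lemma ENNReal.ofReal_mul_natCeil_add_le {θ x s : ℝ} (hθ : 0 < θ) (hx : 0 ≤ x) (hs : 0 ≤ s)
    (C : ℝ≥0∞) :
    ENNReal.ofReal θ * (⌈x / θ + s⌉₊ + C)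
      ≤ ENNReal.ofReal (x + θ * (s + 1)) + ENNReal.ofReal θ * C := by
  rw [mul_add, ← ENNReal.ofReal_natCast, ← ENNReal.ofReal_mul hθ.le]
  gcongr
  calc θ * ⌈x / θ + s⌉₊ ≤ θ * (x / θ + s + 1) :=
        mul_le_mul_of_nonneg_left (Nat.ceil_lt_add_one (by positivity)).le hθ.le
    _ = x + θ * (s + 1) := by field_simp; ring

lemma tendsto_ofReal_add_ofReal_mul {x : ℝ} {C : ℝ≥0∞} (hC : C ≠ ∞) (s : ℝ) :
    Tendsto (fun θ => ENNReal.ofReal (x + θ * (s + 1)) + ENNReal.ofReal θ * C) (𝓝 0)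
      (𝓝 (ENNReal.ofReal x)) := by
  have h := (ENNReal.tendsto_ofReal
    (Tendsto.const_add x ((tendsto_id (x := 𝓝 (0 : ℝ))).mul_const (s + 1)))).add
    (ENNReal.Tendsto.mul_const (ENNReal.tendsto_ofReal (tendsto_id (x := 𝓝 (0 : ℝ)))) (Or.inr hC))
  simpa using h

lemma ENNReal.le_ofReal_of_forall_le_ofReal_mul_rpow {L : ℝ≥0∞} {c s : ℝ}
    (h : ∀ η ∈ Ioo (0 : ℝ) 1, L ≤ ENNReal.ofReal (c * ((1 + η) / (1 - η)) ^ s)) :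
    L ≤ ENNReal.ofReal c := by
  have hcont : ContinuousAt (fun η : ℝ => c * ((1 + η) / (1 - η)) ^ s) 0 := by
    fun_prop (disch := norm_num)
  have hlim := (ENNReal.continuous_ofReal.continuousAt.comp hcont).tendsto.mono_left
    (nhdsWithin_le_nhds (s := Ioi 0))
  simp only [Function.comp_def, add_zero, sub_zero, div_one, Real.one_rpow, mul_one] at hlim
  exact ge_of_tendsto hlim (eventually_of_mem (Ioo_mem_nhdsGT one_pos) h)

/-- the aggregate throughput `R(θ) = log(1+θ)·Σ_{k≥1} p_k(θ)` satisfies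
`limsup_{θ→0⁺} R(θ) ≤ 1/β − 1`. -/
theorem sic_aggregate_throughput_limsup
    {Ω : Type*} [MeasureSpace Ω] [IsProbabilityMeasure (ℙ : Measure Ω)]
    (β : ℝ) (hβ : β ∈ Set.Ioo (0:ℝ) 1)
    (E : ℕ → Ω → ℝ) (hEmeas : ∀ i, Measurable (E i))
    (hEindep : iIndepFun E ℙ)
    (hEdist : ∀ i, ∀ x : ℝ, 0 ≤ x → ℙ {ω | x < E i ω} = ENNReal.ofReal (Real.exp (-x)))
    (ξ : ℕ → Ω → ℝ)
    (hξ : ∀ k ω, ξ k ω = (∑ i ∈ Finset.range k, E i ω) ^ (1/β : ℝ))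
    (I : ℕ → Ω → ℝ) (hI : ∀ k ω, I k ω = ∑' j : ℕ, (ξ (k + 1 + j) ω)⁻¹)
    -- the aggregate throughput, as a function of the SIR threshold θ, valued in [0,∞]
    (R : ℝ → ENNReal)
    (hR : ∀ θ : ℝ, R θ = ENNReal.ofReal (Real.log (1 + θ))
        * ∑' k : ℕ, ℙ {ω | ∀ i, 1 ≤ i → i ≤ k + 1 → θ * I i ω < (ξ i ω)⁻¹}) :
    Filter.limsup R (nhdsWithin 0 (Set.Ioi 0)) ≤ ENNReal.ofReal (1 / β - 1) := by
  obtain ⟨hβ₀, hβ₁⟩ := hβ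
  have hs : 1 < 1 / β := (one_lt_div hβ₀).mpr hβ₁
  have hlaw i := hasLaw_expMeasure_one_of_tail (hEmeas i) (hEdist i)
  simp only [hI, hξ] at hR
  have hbound : ∀ η ∈ Ioo (0 : ℝ) 1,
      limsup R (𝓝[>] 0) ≤ ENNReal.ofReal ((1 / β - 1) * ((1 + η) / (1 - η)) ^ (1 / β)) := by
    rintro η ⟨hη₀, hη₁⟩
    have hC := tsum_measure_not_nearLinearFrom_lt_top hEmeas hEindep hlaw hη₀ hη₁
    refine (limsup_le_limsup ?_).trans_eq
      ((tendsto_ofReal_add_ofReal_mul hC.ne (1 / β)).mono_left nhdsWithin_le_nhds).limsup_eq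
    filter_upwards [self_mem_nhdsWithin] with θ (hθ : 0 < θ)
    rw [hR]
    calc _ ≤ ENNReal.ofReal θ * (_ + _) := mul_le_mul'
          (ENNReal.ofReal_le_ofReal (by linarith [log_le_sub_one_of_pos (by linarith : 0 < 1 + θ)]))
          (tsum_measure_decodable_le (T := fun i ω => ∑ l ∈ Finset.range i, E l ω)
            hs hη₀.le hη₁ hθ)
      _ ≤ _ := ENNReal.ofReal_mul_natCeil_add_le hθ
          (mul_nonneg (by linarith) (rpow_nonneg (div_nonneg (by linarith) (by linarith)) _))
          (by positivity) _
  exact ENNReal.le_ofReal_of_forall_le_ofReal_mul_rpow hbound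
end

section
/- In the noisy network, the aggregate throughput tends to zero as the SIR threshold tends to zero: lim_{θ → 0⁺} log(1+θ) · Σ_{k=1}^∞ p_k^W(θ) = 0. -/
open MeasureTheory ProbabilityTheory Real Filter Topology

/-! Only the last constraint of the decoding event of `k` users matters: it forces
`ξ_k⁻¹ > θ W`, i.e. `T_k < c := a (θ W)^(-β)`. The bound `E e^(-s E) ≤ 1 - e⁻¹ (1 - e^(-s))`,
which uses only `P(E > 1) = e⁻¹`, turns the Chernoff bound with parameter `s = 1 / c` into
`P(T_k < c) ≤ e (1 - 1 / (e (c + 1)))^k`. So at most `e² (c + 1)` users are decodable on average,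
and with `log (1 + θ) ≤ θ` the throughput is `O(θ^(1-β) + θ)`. -/

lemma div_one_add_le_one_sub_exp_neg {s : ℝ} (hs : 0 ≤ s) : s / (1 + s) ≤ 1 - exp (-s) := by
  have h : exp (-s) ≤ (1 + s)⁻¹ := by
    rw [exp_neg]; exact inv_anti₀ (by positivity) (by linarith [add_one_le_exp s])
  have : s / (1 + s) = 1 - (1 + s)⁻¹ := by field_simp; ring
  linarith

lemma lt_rpow_neg_of_lt_inv_rpow_inv {x y β : ℝ} (hx : 0 ≤ x) (hy : 0 < y) (hβ : 0 < β)
    (h : y < (x ^ (1 / β))⁻¹) : x < y ^ (-β) := by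
  have hxβ : x ^ (1 / β) < y⁻¹ := (lt_inv_comm₀ hy (inv_pos.1 (hy.trans h))).1 h
  calc x = (x ^ (1 / β)) ^ β := by rw [← rpow_mul hx, one_div_mul_cancel hβ.ne', rpow_one]
    _ < y⁻¹ ^ β := rpow_lt_rpow (by positivity) hxβ hβ
    _ = y ^ (-β) := by rw [inv_rpow hy.le, rpow_neg hy.le]

lemma tsum_le_ofReal_div_one_sub {p : ℕ → ENNReal} {C ρ : ℝ} (hC : 0 ≤ C) (hρ0 : 0 ≤ ρ)
    (hρ1 : ρ < 1) (hp : ∀ k, p k ≤ ENNReal.ofReal (C * ρ ^ (k + 1))) :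
    ∑' k, p k ≤ ENNReal.ofReal (C / (1 - ρ)) := by
  have hsum : Summable fun k : ℕ => C * ρ ^ k := (summable_geometric_of_lt_one hρ0 hρ1).mul_left C
  calc ∑' k, p k ≤ ∑' k : ℕ, ENNReal.ofReal (C * ρ ^ k) := by
        refine ENNReal.tsum_le_tsum fun k => (hp k).trans (ENNReal.ofReal_le_ofReal ?_)
        exact mul_le_mul_of_nonneg_left (pow_le_pow_of_le_one hρ0 hρ1.le k.le_succ) hC
    _ = ENNReal.ofReal (C / (1 - ρ)) := by
        rw [← ENNReal.ofReal_tsum_of_nonneg (fun k => by positivity) hsum, tsum_mul_left,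
          tsum_geometric_of_lt_one hρ0 hρ1, div_eq_mul_inv]

section Chernoff

variable {Ω : Type*} [MeasurableSpace Ω] {μ : Measure Ω} [IsProbabilityMeasure μ]

lemma integrable_exp_neg_mul_of_nonneg {X : Ω → ℝ} (hX : Measurable X)
    (hX0 : ∀ᵐ ω ∂μ, 0 ≤ X ω) {s : ℝ} (hs : 0 ≤ s) :
    Integrable (fun ω => exp (-s * X ω)) μ := by
  refine Integrable.of_bound (C := 1) (by fun_prop) ?_
  filter_upwards [hX0] with ω hω
  rw [norm_of_nonneg (exp_pos _).le, exp_le_one_iff]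
  nlinarith

lemma mgf_neg_le_one_sub_of_nonneg {X : Ω → ℝ} (hX : Measurable X) (hX0 : ∀ᵐ ω ∂μ, 0 ≤ X ω)
    {s : ℝ} (hs : 0 ≤ s) (t : ℝ) :
    mgf X μ (-s) ≤ 1 - μ.real {ω | t < X ω} * (1 - exp (-(s * t))) := by
  set A := {ω | t < X ω}
  have hA : MeasurableSet A := measurableSet_lt measurable_const hX
  have hpt : ∀ᵐ ω ∂μ, exp (-s * X ω) ≤ 1 - A.indicator (fun _ => 1 - exp (-(s * t))) ω := by
    filter_upwards [hX0] with ω hω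
    by_cases h : t < X ω
    · simp only [A, Set.indicator_of_mem (show ω ∈ {ω | t < X ω} from h), sub_sub_cancel]
      exact exp_le_exp.2 (by nlinarith)
    · simp only [A, Set.indicator_of_notMem (show ω ∉ {ω | t < X ω} from h), sub_zero,
        exp_le_one_iff]
      nlinarith
  calc mgf X μ (-s) = ∫ ω, exp (-s * X ω) ∂μ := rfl
    _ ≤ ∫ ω, (1 - A.indicator (fun _ => 1 - exp (-(s * t))) ω) ∂μ :=
        integral_mono_ae (integrable_exp_neg_mul_of_nonneg hX hX0 hs)
          ((integrable_const _).sub ((integrable_const _).indicator hA)) hpt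
    _ = 1 - μ.real A * (1 - exp (-(s * t))) := by
        rw [integral_sub (integrable_const _) ((integrable_const _).indicator hA),
          integral_indicator_const _ hA]
        simp

lemma measure_sum_lt_le_exp_mul_prod_mgf {ι : Type*} {X : ι → Ω → ℝ} (hind : iIndepFun X μ)
    (hmeas : ∀ i, Measurable (X i)) (hX0 : ∀ i, ∀ᵐ ω ∂μ, 0 ≤ X i ω) (S : Finset ι)
    {s : ℝ} (hs : 0 ≤ s) (c : ℝ) :
    μ {ω | ∑ i ∈ S, X i ω < c} ≤ ENNReal.ofReal (exp (s * c) * ∏ i ∈ S, mgf (X i) μ (-s)) := by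
  have hsum0 : ∀ᵐ ω ∂μ, 0 ≤ ∑ i ∈ S, X i ω := by
    filter_upwards [(eventually_all_finset S).2 fun i _ => hX0 i] with ω hω
    exact Finset.sum_nonneg hω
  have hint : Integrable (fun ω => exp (-s * (∑ i ∈ S, X i) ω)) μ := by
    simpa only [Finset.sum_apply] using integrable_exp_neg_mul_of_nonneg
      (Finset.measurable_sum S fun i _ => hmeas i) hsum0 hs
  have h := measure_le_le_exp_mul_mgf c (neg_nonpos.2 hs) hint
  rw [neg_neg, hind.mgf_sum hmeas] at h
  calc μ {ω | ∑ i ∈ S, X i ω < c} ≤ μ {ω | (∑ i ∈ S, X i) ω ≤ c} :=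
        measure_mono fun ω (hω : _ < c) => show (∑ i ∈ S, X i) ω ≤ c by
          rw [Finset.sum_apply]; exact hω.le
    _ = ENNReal.ofReal (μ.real {ω | (∑ i ∈ S, X i) ω ≤ c}) := (ofReal_measureReal).symm
    _ ≤ _ := ENNReal.ofReal_le_ofReal h

lemma measure_sum_lt_le_exp_one_mul_pow {ι : Type*} {X : ι → Ω → ℝ} (hind : iIndepFun X μ)
    (hmeas : ∀ i, Measurable (X i)) (hX0 : ∀ i, ∀ᵐ ω ∂μ, 0 ≤ X i ω) {q : ℝ} (hq0 : 0 ≤ q)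
    (hq : ∀ i, q ≤ μ.real {ω | 1 < X i ω}) (S : Finset ι) {c : ℝ} (hc : 0 < c) :
    μ {ω | ∑ i ∈ S, X i ω < c} ≤ ENNReal.ofReal (exp 1 * (1 - q / (c + 1)) ^ S.card) := by
  have hs : 0 ≤ c⁻¹ := inv_nonneg.2 hc.le
  have hmgf : ∀ i, mgf (X i) μ (-c⁻¹) ≤ 1 - q / (c + 1) := fun i => calc
    mgf (X i) μ (-c⁻¹) ≤ 1 - μ.real {ω | 1 < X i ω} * (1 - exp (-(c⁻¹ * 1))) :=
        mgf_neg_le_one_sub_of_nonneg (hmeas i) (hX0 i) hs 1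
    _ ≤ 1 - q * (c⁻¹ / (1 + c⁻¹)) := by
        rw [mul_one]
        have h := div_one_add_le_one_sub_exp_neg hs
        have : 0 ≤ c⁻¹ / (1 + c⁻¹) := by positivity
        nlinarith [hq i]
    _ = 1 - q / (c + 1) := by field_simp
  calc μ {ω | ∑ i ∈ S, X i ω < c}
      ≤ ENNReal.ofReal (exp (c⁻¹ * c) * ∏ i ∈ S, mgf (X i) μ (-c⁻¹)) :=
        measure_sum_lt_le_exp_mul_prod_mgf hind hmeas hX0 S hs c
    _ ≤ ENNReal.ofReal (exp 1 * (1 - q / (c + 1)) ^ S.card) := by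
        rw [inv_mul_cancel₀ hc.ne', ← Finset.prod_const]
        gcongr with i
        · exact fun i _ => mgf_nonneg
        · exact hmgf i

end Chernoff

section Network

variable {Ω : Type*} [MeasurableSpace Ω] {μ : Measure Ω} {β a W θ : ℝ} {E ξ I : ℕ → Ω → ℝ}

lemma measure_decodable_le_measure_sum_lt (hβ : 0 < β) (ha : 0 < a) (hW : 0 < W) (hθ : 0 < θ)
    (hE0 : ∀ᵐ ω ∂μ, ∀ i, 0 ≤ E i ω)
    (hξ : ∀ k ω, ξ k ω = ((∑ i ∈ Finset.range k, E i ω) / a) ^ (1 / β : ℝ))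
    (hI : ∀ k ω, I k ω = ∑' j : ℕ, (ξ (k + 1 + j) ω)⁻¹) (k : ℕ) :
    μ {ω | ∀ i, 1 ≤ i → i ≤ k + 1 → θ * (I i ω + W) < (ξ i ω)⁻¹}
      ≤ μ {ω | ∑ i ∈ Finset.range (k + 1), E i ω < a * (θ * W) ^ (-β)} := by
  refine measure_mono_ae ?_
  filter_upwards [hE0] with ω hω (hdec : ∀ i, 1 ≤ i → i ≤ k + 1 → θ * (I i ω + W) < (ξ i ω)⁻¹)
  have hx : ∀ n, 0 ≤ (∑ i ∈ Finset.range n, E i ω) / a := fun n =>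
    div_nonneg (Finset.sum_nonneg fun i _ => hω i) ha.le
  have hI0 : 0 ≤ I (k + 1) ω := by
    rw [hI]
    exact tsum_nonneg fun j => by rw [hξ]; exact inv_nonneg.2 (rpow_nonneg (hx _) _)
  have h : θ * W < (((∑ i ∈ Finset.range (k + 1), E i ω) / a) ^ (1 / β))⁻¹ := by
    rw [← hξ]
    exact lt_of_le_of_lt (by nlinarith) (hdec (k + 1) le_add_self le_rfl)
  exact (div_lt_iff₀' ha).1 (lt_rpow_neg_of_lt_inv_rpow_inv (hx _) (mul_pos hθ hW) hβ h)

lemma tsum_measure_decodable_le_s16 [IsProbabilityMeasure μ] (hβ : 0 < β) (ha : 0 < a) (hW : 0 < W)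
    (hθ : 0 < θ) (hEmeas : ∀ i, Measurable (E i)) (hEindep : iIndepFun E μ)
    (hE0 : ∀ᵐ ω ∂μ, ∀ i, 0 ≤ E i ω) (hE1 : ∀ i, exp (-1) ≤ μ.real {ω | 1 < E i ω})
    (hξ : ∀ k ω, ξ k ω = ((∑ i ∈ Finset.range k, E i ω) / a) ^ (1 / β : ℝ))
    (hI : ∀ k ω, I k ω = ∑' j : ℕ, (ξ (k + 1 + j) ω)⁻¹) :
    ∑' k : ℕ, μ {ω | ∀ i, 1 ≤ i → i ≤ k + 1 → θ * (I i ω + W) < (ξ i ω)⁻¹}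
      ≤ ENNReal.ofReal (exp 1 ^ 2 * (a * (θ * W) ^ (-β) + 1)) := by
  set c := a * (θ * W) ^ (-β)
  have hc : 0 < c := by positivity
  have hq : exp (-1) / (c + 1) ≤ 1 := by
    rw [div_le_one (by positivity)]
    linarith [exp_le_one_iff.2 (show (-1 : ℝ) ≤ 0 by norm_num)]
  refine (tsum_le_ofReal_div_one_sub (exp_pos 1).le (sub_nonneg.2 hq)
    (sub_lt_self 1 (by positivity)) fun k => ?_).trans_eq ?_
  · refine (measure_decodable_le_measure_sum_lt hβ ha hW hθ hE0 hξ hI k).trans ?_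
    simpa using measure_sum_lt_le_exp_one_mul_pow hEindep hEmeas (ae_all_iff.1 hE0)
      (exp_pos _).le hE1 (Finset.range (k + 1)) hc
  · rw [sub_sub_cancel, exp_neg]
    field_simp

end Network

lemma tendsto_ofReal_mul_rpow_add_mul_nhdsGT_zero {p : ℝ} (hp : 0 < p) (C D : ℝ) :
    Tendsto (fun θ : ℝ => ENNReal.ofReal (C * θ ^ p + D * θ)) (𝓝[>] 0) (𝓝 0) := by
  have hcont : Continuous fun θ : ℝ => C * θ ^ p + D * θ := by
    have := continuous_rpow_const (q := p) hp.le
    fun_prop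
  have h := (ENNReal.continuous_ofReal.comp hcont).tendsto 0
  rw [Function.comp_apply, zero_rpow hp.ne', mul_zero, mul_zero, add_zero,
    ENNReal.ofReal_zero] at h
  exact h.mono_left nhdsWithin_le_nhds

/-- in the noisy network, the aggregate throughput
`log(1+θ)·Σ_{k≥1} p_k^W(θ)` tends to `0` as `θ → 0⁺`. -/
theorem sic_noisy_throughput_tendsto_zero
    {Ω : Type*} [MeasureSpace Ω] [IsProbabilityMeasure (ℙ : Measure Ω)]
    (β a W : ℝ) (hβ : β ∈ Set.Ioo (0:ℝ) 1) (ha : 0 < a) (hW : 0 < W)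
    (E : ℕ → Ω → ℝ) (hEmeas : ∀ i, Measurable (E i))
    (hEindep : iIndepFun E ℙ)
    (hEdist : ∀ i, ∀ x : ℝ, 0 ≤ x → ℙ {ω | x < E i ω} = ENNReal.ofReal (Real.exp (-x)))
    (ξ : ℕ → Ω → ℝ)
    (hξ : ∀ k ω, ξ k ω = ((∑ i ∈ Finset.range k, E i ω) / a) ^ (1/β : ℝ))
    (I : ℕ → Ω → ℝ) (hI : ∀ k ω, I k ω = ∑' j : ℕ, (ξ (k + 1 + j) ω)⁻¹)
    (R : ℝ → ENNReal)
    (hR : ∀ θ : ℝ, R θ = ENNReal.ofReal (Real.log (1 + θ))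
        * ∑' k : ℕ, ℙ {ω | ∀ i, 1 ≤ i → i ≤ k + 1 → θ * (I i ω + W) < (ξ i ω)⁻¹}) :
    Filter.Tendsto R (nhdsWithin 0 (Set.Ioi 0)) (nhds 0) := by
  obtain ⟨hβ0, hβ1⟩ := hβ
  have hE0 : ∀ᵐ ω ∂(ℙ : Measure Ω), ∀ i, 0 ≤ E i ω := by
    refine ae_all_iff.2 fun i => ?_
    have hpos : ∀ᵐ ω ∂(ℙ : Measure Ω), 0 < E i ω :=
      (prob_compl_eq_zero_iff (measurableSet_lt measurable_const (hEmeas i))).2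
        (by simpa using hEdist i 0 le_rfl)
    exact hpos.mono fun ω => le_of_lt
  have hE1 : ∀ i, exp (-1) ≤ (ℙ : Measure Ω).real {ω | 1 < E i ω} := fun i => by
    rw [measureReal_def, hEdist i 1 zero_le_one, ENNReal.toReal_ofReal (exp_pos _).le]
  have hbound : ∀ θ ∈ Set.Ioi (0 : ℝ),
      R θ ≤ ENNReal.ofReal (exp 1 ^ 2 * a * W ^ (-β) * θ ^ (1 - β) + exp 1 ^ 2 * θ) := by
    intro θ hθ
    rw [hR]
    calc _ ≤ ENNReal.ofReal θ * ENNReal.ofReal (exp 1 ^ 2 * (a * (θ * W) ^ (-β) + 1)) := by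
          gcongr
          · linarith [log_le_sub_one_of_pos (show 0 < 1 + θ by linarith [hθ.out])]
          · exact tsum_measure_decodable_le_s16 hβ0 ha hW hθ hEmeas hEindep hE0 hE1 hξ hI
      _ = _ := by
          rw [← ENNReal.ofReal_mul hθ.out.le, mul_rpow hθ.out.le hW.le, sub_eq_add_neg,
            rpow_add hθ.out, rpow_one]
          ring_nf
  exact tendsto_of_tendsto_of_tendsto_of_le_of_le' tendsto_const_nhds
    (tendsto_ofReal_mul_rpow_add_mul_nhdsGT_zero (sub_pos.2 hβ1) _ _)
    (Eventually.of_forall fun θ => zero_le) (eventually_nhdsWithin_of_forall hbound)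
end

section
/- Let 𝒦 ⊂ {1,2,3,…} be a finite set of indices with |𝒦| = k ≥ 1, and suppose that ξ_i^{−1} > θ · Σ_{j ∉ 𝒦} ξ_j^{−1} for every i ∈ 𝒦. Then ξ_i^{−1} > θ · Σ_{j > k} ξ_j^{−1} for every 1 ≤ i ≤ k. Moreover, if θ ≥ 1, then necessarily 𝒦 = {1, 2, …, k}. -/
/-!
Since the `ξ_j⁻¹` decrease, the `k` indices `1, …, k` carry the largest possible finite sum
among all `k`-element sets of indices, so their complement carries the smallest complementary
sum: `Σ_{j > k} ξ_j⁻¹ ≤ Σ_{j ∉ 𝒦} ξ_j⁻¹`. Some element of `𝒦` is `≥ i` for each `i ≤ k`, which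
gives the first claim. If `θ ≥ 1` and `𝒦` contained some `m > k`, it would miss some `n ≤ k`,
and then `ξ_m⁻¹ ≤ ξ_n⁻¹ ≤ Σ_{j ∉ 𝒦} ξ_j⁻¹ < ξ_m⁻¹`.
-/

open Finset

theorem Finset.sum_le_sum_Icc_card_of_antitoneOn {M : Type*} [AddCommMonoid M] [PartialOrder M]
    [IsOrderedAddMonoid M] {f : ℕ → M} (hf : AntitoneOn f (Set.Ici 1)) {K : Finset ℕ}
    (hK : ∀ i ∈ K, 1 ≤ i) :
    ∑ i ∈ K, f i ≤ ∑ i ∈ Icc 1 #K, f i := by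
  set I := Icc 1 #K
  have hcard : #(K \ I) = #(I \ K) := card_sdiff_comm (by simp [I])
  have hout : ∀ i ∈ K \ I, f i ≤ f (#K + 1) := by
    intro i hi
    obtain ⟨hiK, hiI⟩ := mem_sdiff.mp hi
    have : #K < i := by simp only [I, mem_Icc, not_and, not_le] at hiI; exact hiI (hK i hiK)
    exact hf (Set.mem_Ici.mpr (Nat.le_add_left 1 #K)) (Set.mem_Ici.mpr (hK i hiK)) this
  have hin : ∀ i ∈ I \ K, f (#K + 1) ≤ f i := by
    intro i hi
    obtain ⟨hi1, hik⟩ := mem_Icc.mp (mem_sdiff.mp hi).1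
    exact hf (Set.mem_Ici.mpr hi1) (Set.mem_Ici.mpr (Nat.le_add_left 1 #K)) (by omega)
  calc ∑ i ∈ K, f i = ∑ i ∈ K ∩ I, f i + ∑ i ∈ K \ I, f i := (sum_inter_add_sum_sdiff _ _ _).symm
    _ ≤ ∑ i ∈ K ∩ I, f i + ∑ i ∈ I \ K, f i := by
      refine add_le_add le_rfl ?_
      calc ∑ i ∈ K \ I, f i ≤ #(K \ I) • f (#K + 1) := sum_le_card_nsmul _ _ _ hout
        _ = #(I \ K) • f (#K + 1) := by rw [hcard]
        _ ≤ ∑ i ∈ I \ K, f i := card_nsmul_le_sum _ _ _ hin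
    _ = ∑ i ∈ I, f i := by rw [inter_comm, sum_inter_add_sum_sdiff]

theorem Summable.sum_add_tsum_diff {α β : Type*} [AddCommGroup β] [UniformSpace β]
    [IsUniformAddGroup β] [CompleteSpace β] [T2Space β] {f : α → β} (hf : Summable f)
    {A : Set α} {K : Finset α} (hK : ↑K ⊆ A) :
    ∑ x ∈ K, f x + ∑' x : ↥(A \ ↑K), f x = ∑' x : A, f x := by
  have hunion := (hf.subtype _).tsum_union_disjoint (Set.disjoint_sdiff_right (s := ↑K) (t := A))
    (hf.subtype _)
  rw [Set.union_sdiff_cancel hK] at hunion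
  rw [hunion, Finset.tsum_subtype']

theorem tsum_diff_le_tsum_diff {α β : Type*} [AddCommGroup β] [PartialOrder β]
    [IsOrderedAddMonoid β] [UniformSpace β] [IsUniformAddGroup β] [CompleteSpace β] [T2Space β]
    {f : α → β} (hf : Summable f) {A : Set α} {K L : Finset α} (hK : ↑K ⊆ A) (hL : ↑L ⊆ A)
    (hKL : ∑ x ∈ K, f x ≤ ∑ x ∈ L, f x) :
    ∑' x : ↥(A \ ↑L), f x ≤ ∑' x : ↥(A \ ↑K), f x := by
  rw [← add_le_add_iff_left (∑ x ∈ L, f x), hf.sum_add_tsum_diff hL,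
    ← hf.sum_add_tsum_diff hK]
  gcongr

theorem tsum_nat_add_le_tsum_compl {f : ℕ → ℝ} (hf : Summable f)
    (hanti : AntitoneOn f (Set.Ici 1)) {K : Finset ℕ} (hK : ∀ i ∈ K, 1 ≤ i) :
    ∑' j, f (#K + 1 + j) ≤ ∑' j : {j : ℕ // 1 ≤ j ∧ j ∉ K}, f j := by
  have htail : ∑' j, f (#K + 1 + j) = ∑' j : ↥(Set.Ici 1 \ ↑(Icc 1 #K)), f j := by
    rw [← tsum_range f (add_right_injective (#K + 1))]
    refine tsum_congr_set_coe f (Set.ext fun j => ?_)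
    simp only [Set.mem_range, Set.mem_sdiff, Set.mem_Ici, coe_Icc, Set.mem_Icc, not_and, not_le]
    exact ⟨fun ⟨i, hi⟩ => by omega, fun h => ⟨j - (#K + 1), by omega⟩⟩
  rw [htail]
  exact tsum_diff_le_tsum_diff hf (fun i hi => hK i hi) (fun i hi => (mem_Icc.mp hi).1)
    (sum_le_sum_Icc_card_of_antitoneOn hanti hK)

theorem Finset.exists_mem_ge_of_le_card {K : Finset ℕ} (hK : ∀ i ∈ K, 1 ≤ i) {i : ℕ}
    (hi : 1 ≤ i) (hiK : i ≤ #K) : ∃ m ∈ K, i ≤ m := by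
  by_contra! h
  have : #K ≤ #(Ico 1 i) := card_le_card fun m hm => mem_Ico.mpr ⟨hK m hm, h m hm⟩
  simp only [Nat.card_Ico] at this
  omega

theorem Finset.eq_Icc_card_of_tsum_compl_lt {f : ℕ → ℝ} (hf : Summable f)
    (hanti : AntitoneOn f (Set.Ici 1)) (hnonneg : ∀ j, 1 ≤ j → 0 ≤ f j) {K : Finset ℕ}
    (hK : ∀ i ∈ K, 1 ≤ i) (hlt : ∀ i ∈ K, ∑' j : {j : ℕ // 1 ≤ j ∧ j ∉ K}, f j < f i) :
    K = Icc 1 #K := by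
  by_contra hne
  obtain ⟨m, hmK, hmI⟩ := not_subset.mp fun h => hne (eq_of_subset_of_card_le h (by simp))
  obtain ⟨n, hn⟩ : (Icc 1 #K \ K).Nonempty := by
    rw [← card_pos, ← card_sdiff_comm (by simp)]
    exact card_pos.mpr ⟨m, mem_sdiff.mpr ⟨hmK, hmI⟩⟩
  obtain ⟨hnI, hnK⟩ := mem_sdiff.mp hn
  obtain ⟨hn1, hnk⟩ := mem_Icc.mp hnI
  have hkm : #K < m := by simp only [mem_Icc, not_and, not_le] at hmI; exact hmI (hK m hmK)
  have hmn : f m ≤ f n := hanti (Set.mem_Ici.mpr hn1) (Set.mem_Ici.mpr (hK m hmK)) (by omega)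
  have hn_le : f n ≤ ∑' j : {j : ℕ // 1 ≤ j ∧ j ∉ K}, f j :=
    (hf.subtype _).le_tsum ⟨n, hn1, hnK⟩ fun j _ => hnonneg j j.2.1
  exact (hlt m hmK).not_ge (hmn.trans hn_le)

theorem unique_decodable_set_general
    (θ : ℝ) (hθ : 0 < θ) (ξ : ℕ → ℝ)
    (hpos : ∀ i, 1 ≤ i → 0 < ξ i)
    (hmono : ∀ i j, 1 ≤ i → i ≤ j → ξ i ≤ ξ j)
    (hsum : Summable fun j : ℕ => (ξ (j + 1))⁻¹)
    (𝒦 : Finset ℕ) (h𝒦 : ∀ i ∈ 𝒦, 1 ≤ i)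
    (k : ℕ) (hcard : 𝒦.card = k)
    (hdec : ∀ i ∈ 𝒦, θ * (∑' j : {j : ℕ // 1 ≤ j ∧ j ∉ 𝒦}, (ξ j)⁻¹) < (ξ i)⁻¹) :
    (∀ i, 1 ≤ i → i ≤ k → θ * (∑' j : ℕ, (ξ (k + 1 + j))⁻¹) < (ξ i)⁻¹)
    ∧ (1 ≤ θ → 𝒦 = Finset.Icc 1 k) := by
  subst hcard
  have hf : Summable fun j => (ξ j)⁻¹ := (summable_nat_add_iff 1).mp hsum
  have hanti : AntitoneOn (fun j => (ξ j)⁻¹) (Set.Ici 1) := fun i hi j _ hij =>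
    inv_anti₀ (hpos i hi) (hmono i j hi hij)
  have hnonneg : ∀ j, 1 ≤ j → 0 ≤ (ξ j)⁻¹ := fun j hj => (inv_pos.mpr (hpos j hj)).le
  refine ⟨fun i hi hik => ?_, fun hθ1 => ?_⟩
  · obtain ⟨m, hm, him⟩ := exists_mem_ge_of_le_card h𝒦 hi hik
    calc θ * ∑' j, (ξ (#𝒦 + 1 + j))⁻¹ ≤ θ * ∑' j : {j : ℕ // 1 ≤ j ∧ j ∉ 𝒦}, (ξ j)⁻¹ :=
          mul_le_mul_of_nonneg_left (tsum_nat_add_le_tsum_compl hf hanti h𝒦) hθ.le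
      _ < (ξ m)⁻¹ := hdec m hm
      _ ≤ (ξ i)⁻¹ := hanti hi (h𝒦 m hm) him
  · refine eq_Icc_card_of_tsum_compl_lt hf hanti hnonneg h𝒦 fun i hi => ?_
    have hS : 0 ≤ ∑' j : {j : ℕ // 1 ≤ j ∧ j ∉ 𝒦}, (ξ j)⁻¹ := tsum_nonneg fun j => hnonneg j j.2.1
    exact (le_mul_of_one_le_left hS hθ1).trans_lt (hdec i hi)

/-- Unique decodable set: let `(ξ_i)_{i≥1}` be a nondecreasing sequence of
positive reals with summable inverses, and `𝒦` a `k`-element set of indices `≥ 1` such that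
`ξ_i⁻¹ > θ·Σ_{j ≥ 1, j ∉ 𝒦} ξ_j⁻¹` for all `i ∈ 𝒦`. Then `ξ_i⁻¹ > θ·Σ_{j > k} ξ_j⁻¹` for all
`1 ≤ i ≤ k`; moreover, if `θ ≥ 1`, then `𝒦 = {1, …, k}`. -/
theorem unique_decodable_set
    (θ : ℝ) (hθ : 0 < θ) (ξ : ℕ → ℝ)
    (hpos : ∀ i, 1 ≤ i → 0 < ξ i)
    (hmono : ∀ i j, 1 ≤ i → i ≤ j → ξ i ≤ ξ j)
    (hsum : Summable fun j : ℕ => (ξ (j + 1))⁻¹)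
    (𝒦 : Finset ℕ) (h𝒦 : ∀ i ∈ 𝒦, 1 ≤ i)
    (k : ℕ) (hk : 1 ≤ k) (hcard : 𝒦.card = k)
    (hdec : ∀ i ∈ 𝒦, θ * (∑' j : {j : ℕ // 1 ≤ j ∧ j ∉ 𝒦}, (ξ j)⁻¹) < (ξ i)⁻¹) :
    (∀ i, 1 ≤ i → i ≤ k → θ * (∑' j : ℕ, (ξ (k + 1 + j))⁻¹) < (ξ i)⁻¹)
    ∧ (1 ≤ θ → 𝒦 = Finset.Icc 1 k) :=
  unique_decodable_set_general θ hθ ξ hpos hmono hsum 𝒦 h𝒦 k hcard hdec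
end

section
/- The coverage probability with (infinite) SIC capability — the probability that there exist an integer l ≥ 0 and an integer k ≥ 1 with t_k = 1 such that ξ_i^{−1} > θ I_i for all 1 ≤ i ≤ l and ξ_k^{−1} > θ I_l^{!k} — equals Σ_{k=1}^∞ (1−η)^{k−1} · η · p_k. -/
open MeasureTheory ProbabilityTheory Real
open scoped ENNReal

/-!
Cancelling the `l` strongest signals and then decoding the `k`-th against all the others is
never easier than decoding the `k` strongest signals one after the other: for `l < i ≤ k` we have
`I_i ≤ I_l^{!k}` and `ξ_k⁻¹ ≤ ξ_i⁻¹`. So, almost surely, the event is that the first accessible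
base station `k` and all stronger ones are successively decodable. The first accessible index is
geometric with parameter `η` and independent of the path-loss process, which gives the series.
-/

/-- The SIC condition `ξ_i⁻¹ > θ I_i` for all `1 ≤ i ≤ k`, for signal strengths `a j = ξ_j⁻¹`. -/
def SuccessivelyDecodable (θ : ℝ) (a : ℕ → ℝ) (k : ℕ) : Prop :=
  ∀ i, 1 ≤ i → i ≤ k → θ * ∑' j, a (i + 1 + j) < a i

theorem SuccessivelyDecodable.antitone {θ : ℝ} {a : ℕ → ℝ} :
    Antitone (SuccessivelyDecodable θ a) :=
  fun _ _ hjk h i hi hij => h i hi (hij.trans hjk)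

section Tails

variable {a : ℕ → ℝ}

theorem tsum_skip_succ_eq_tsum_tail (l : ℕ) :
    ∑' j : {j : ℕ // l + 1 ≤ j ∧ j ≠ l + 1}, a j = ∑' j, a (l + 1 + 1 + j) := by
  let g : ℕ → {j : ℕ // l + 1 ≤ j ∧ j ≠ l + 1} := fun n => ⟨l + 1 + 1 + n, by omega⟩
  have hg : Function.Injective g := fun m n h => by simpa [g] using congrArg Subtype.val h
  refine (hg.tsum_eq (f := fun j => a j) fun j _ => ⟨j.1 - (l + 2), ?_⟩).symm
  exact Subtype.ext (by have := j.2; simp only [g]; omega)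

/-- The terms `a j`, `j > i`, inject into the skip-sum; if `k > i`, the missing term `a k`
is matched with `a (l + 1) ≥ a k`. -/
theorem tsum_tail_le_tsum_skip (h0 : ∀ j, 1 ≤ j → 0 ≤ a j) (ha : AntitoneOn a (Set.Ici 1))
    {l i k : ℕ} (hli : l < i) :
    ∑' j, a (i + 1 + j) ≤ ∑' j : {j : ℕ // l + 1 ≤ j ∧ j ≠ k}, a j := by
  by_cases hs : Summable fun j => a (i + 1 + j)
  swap
  · rw [tsum_eq_zero_of_not_summable hs]
    exact tsum_nonneg fun j => h0 j (by omega)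
  classical
  have hsa : Summable a :=
    (summable_nat_add_iff (i + 1)).1 (hs.congr fun j => by rw [add_comm])
  let e : ℕ → {j : ℕ // l + 1 ≤ j ∧ j ≠ k} := fun n =>
    if h : i + 1 + n = k then ⟨l + 1, by omega⟩ else ⟨i + 1 + n, by omega, h⟩
  have he : Function.Injective e := by
    intro m n hmn
    simp only [e] at hmn
    split_ifs at hmn <;> simp only [Subtype.mk.injEq] at hmn <;> omega
  refine hs.tsum_le_tsum_of_inj e he (fun j _ => h0 j (by omega)) (fun n => ?_) (hsa.subtype _)
  simp only [e]
  split_ifs with h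
  · show a (i + 1 + n) ≤ a (l + 1)
    rw [h]
    exact ha (Set.mem_Ici.2 (by omega)) (Set.mem_Ici.2 (by omega)) (by omega)
  · exact le_rfl

end Tails

section Decoding

variable {θ : ℝ} {a : ℕ → ℝ}

theorem SuccessivelyDecodable.of_skip (hθ : 0 ≤ θ) (h0 : ∀ j, 1 ≤ j → 0 ≤ a j)
    (ha : AntitoneOn a (Set.Ici 1)) {l k : ℕ} (hk : 1 ≤ k) (hl : SuccessivelyDecodable θ a l)
    (hskip : θ * ∑' j : {j : ℕ // l + 1 ≤ j ∧ j ≠ k}, a j < a k) :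
    SuccessivelyDecodable θ a k := by
  intro i hi hik
  rcases le_or_gt i l with hil | hli
  · exact hl i hi hil
  calc θ * ∑' j, a (i + 1 + j)
      ≤ θ * ∑' j : {j : ℕ // l + 1 ≤ j ∧ j ≠ k}, a j :=
        mul_le_mul_of_nonneg_left (tsum_tail_le_tsum_skip h0 ha hli) hθ
    _ < a k := hskip
    _ ≤ a i := ha (Set.mem_Ici.2 hi) (Set.mem_Ici.2 hk) hik

theorem SuccessivelyDecodable.skip_pred {l : ℕ} (h : SuccessivelyDecodable θ a (l + 1)) :
    θ * ∑' j : {j : ℕ // l + 1 ≤ j ∧ j ≠ l + 1}, a j < a (l + 1) := by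
  rw [tsum_skip_succ_eq_tsum_tail]
  exact h (l + 1) le_add_self le_rfl

theorem exists_decodable_after_cancellation_iff (hθ : 0 ≤ θ) (h0 : ∀ j, 1 ≤ j → 0 ≤ a j)
    (ha : AntitoneOn a (Set.Ici 1)) (Q : ℕ → Prop) :
    (∃ l k, 1 ≤ k ∧ Q k ∧ SuccessivelyDecodable θ a l ∧
        θ * ∑' j : {j : ℕ // l + 1 ≤ j ∧ j ≠ k}, a j < a k) ↔
      ∃ k, 1 ≤ k ∧ Q k ∧ SuccessivelyDecodable θ a k := by
  constructor
  · rintro ⟨l, k, hk, hQ, hl, hskip⟩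
    exact ⟨k, hk, hQ, hl.of_skip hθ h0 ha hk hskip⟩
  · rintro ⟨_ | l, hk, hQ, hdec⟩
    · omega
    · exact ⟨l, l + 1, hk, hQ, SuccessivelyDecodable.antitone l.le_succ hdec, hdec.skip_pred⟩

end Decoding

theorem exists_iff_exists_first {Q D : ℕ → Prop} (hD : Antitone D) :
    (∃ k, 1 ≤ k ∧ Q k ∧ D k) ↔
      ∃ n, D (n + 1) ∧ Q (n + 1) ∧ ∀ j, 1 ≤ j → j ≤ n → ¬ Q j := by
  classical
  constructor
  · rintro ⟨_ | k, hk, hQ, hDk⟩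
    · omega
    have hex : ∃ n, Q (n + 1) := ⟨k, hQ⟩
    refine ⟨Nat.find hex, hD (Nat.succ_le_succ (Nat.find_min' hex hQ)) hDk, Nat.find_spec hex,
      fun j hj hjn hQj => ?_⟩
    obtain ⟨i, rfl⟩ := Nat.exists_eq_add_of_le' hj
    exact Nat.find_min hex (by omega) hQj
  · rintro ⟨n, hDn, hQ, -⟩
    exact ⟨n + 1, n.succ_pos, hQ, hDn⟩

section FirstSuccess

variable {Ω : Type*} {mΩ : MeasurableSpace Ω} {μ : Measure Ω} {t : ℕ → Ω → ℝ}

/-- The event that `n + 1` is the first index `j ≥ 1` with `t j = 1`. -/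
def firstSuccess (t : ℕ → Ω → ℝ) (n : ℕ) : Set Ω :=
  ⋂ j ∈ Finset.Icc 1 (n + 1), t j ⁻¹' (if j = n + 1 then {1} else {1}ᶜ)

theorem mem_firstSuccess {n : ℕ} {ω : Ω} :
    ω ∈ firstSuccess t n ↔ t (n + 1) ω = 1 ∧ ∀ j, 1 ≤ j → j ≤ n → ¬ t j ω = 1 := by
  simp only [firstSuccess, Set.mem_iInter, Finset.mem_Icc, Set.mem_preimage]
  constructor
  · intro h
    refine ⟨by simpa using h (n + 1) ⟨n.succ_pos, le_rfl⟩, fun j hj hjn => ?_⟩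
    simpa [show j ≠ n + 1 by omega] using h j ⟨hj, by omega⟩
  · rintro ⟨hn, hlt⟩ j ⟨hj, hjn⟩
    split_ifs with h
    · simpa [h] using hn
    · exact hlt j hj (by omega)

theorem pairwise_disjoint_firstSuccess : Pairwise (Function.onFun Disjoint (firstSuccess t)) := by
  refine fun m n hmn => Set.disjoint_left.2 fun ω hm hn => ?_
  rw [mem_firstSuccess] at hm hn
  rcases hmn.lt_or_gt with h | h
  · exact hn.2 (m + 1) m.succ_pos h hm.1
  · exact hm.2 (n + 1) n.succ_pos h hn.1

theorem measure_firstSuccess [IsProbabilityMeasure μ] (ht : iIndepFun t μ)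
    (htm : ∀ k, Measurable (t k)) {q : ℝ≥0∞} (hq : ∀ k, μ (t k ⁻¹' {1}) = q) (n : ℕ) :
    μ (firstSuccess t n) = (1 - q) ^ n * q := by
  have hsets : ∀ j ∈ Finset.Icc 1 (n + 1),
      MeasurableSet (if j = n + 1 then {1} else {1}ᶜ : Set ℝ) := fun j _ => by
    split_ifs <;> measurability
  rw [firstSuccess, ht.measure_inter_preimage_eq_mul _ hsets,
    Finset.prod_Icc_succ_top (Nat.le_add_left 1 n), if_pos rfl, hq,
    Finset.prod_congr rfl (g := fun _ => 1 - q), Finset.prod_const, Nat.card_Icc,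
    Nat.add_sub_cancel]
  intro j hj
  rw [if_neg (by simp only [Finset.mem_Icc] at hj; omega), Set.preimage_compl,
    prob_compl_eq_one_sub (htm j (measurableSet_singleton 1)), hq]

theorem measurableSet_firstSuccess (htm : ∀ k, Measurable (t k)) (n : ℕ) :
    MeasurableSet (firstSuccess t n) :=
  Finset.measurableSet_biInter _ fun j _ => htm j (by split_ifs <;> measurability)

end FirstSuccess

theorem measurableSet_successivelyDecodable {Ω : Type*} {mΩ : MeasurableSpace Ω}
    {a : Ω → ℕ → ℝ} (ha : ∀ j, Measurable fun ω => a ω j) (θ : ℝ) (k : ℕ) :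
    MeasurableSet {ω | SuccessivelyDecodable θ (a ω) k} := by
  simp only [SuccessivelyDecodable, Set.ofPred_forall]
  exact .iInter fun i => .iInter fun _ => .iInter fun _ =>
    measurableSet_lt (measurable_const.mul (.tsum fun j => ha _)) (ha i)

theorem antitoneOn_inv_rpow_sum_range {E : ℕ → ℝ} (hE : ∀ i, 0 < E i) {r : ℝ} (hr : 0 ≤ r) :
    AntitoneOn (fun k => ((∑ i ∈ Finset.range k, E i) ^ r)⁻¹) (Set.Ici 1) := by
  intro i hi j _ hij
  have hpos : 0 < ∑ l ∈ Finset.range i, E l :=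
    Finset.sum_pos (fun l _ => hE l) (Finset.nonempty_range_iff.2 (by simp at hi; omega))
  refine inv_anti₀ (rpow_pos_of_pos hpos r) (rpow_le_rpow hpos.le ?_ hr)
  exact Finset.sum_le_sum_of_subset_of_nonneg (Finset.range_subset_range.2 hij)
    fun l _ _ => (hE l).le

/-- `hs` and `ht` say that `s` is `σ(f i : i)`-measurable and `t` is `σ(g j : j)`-measurable. -/
theorem ProbabilityTheory.iIndepFun.measure_inter_eq_mul_of_sumElim {Ω ι κ β : Type*}
    {mΩ : MeasurableSpace Ω} {μ : Measure Ω} [mβ : MeasurableSpace β] {f : ι → Ω → β}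
    {g : κ → Ω → β} (h : iIndepFun (Sum.elim f g) μ) (hf : ∀ i, Measurable (f i))
    (hg : ∀ j, Measurable (g j)) {s t : Set Ω}
    (hs : ∀ {m : MeasurableSpace Ω}, (∀ i, Measurable[m] (f i)) → MeasurableSet[m] s)
    (ht : ∀ {m : MeasurableSpace Ω}, (∀ j, Measurable[m] (g j)) → MeasurableSet[m] t) :
    μ (s ∩ t) = μ s * μ t := by
  have h_le : ∀ x, mβ.comap (Sum.elim f g x) ≤ mΩ := by
    rintro (i | j)
    exacts [(hf i).comap_le, (hg j).comap_le]
  have hind : Indep (⨆ i, mβ.comap (f i)) (⨆ j, mβ.comap (g j)) μ := by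
    simpa only [iSup_range, Sum.elim_inl, Sum.elim_inr] using
      indep_iSup_of_disjoint h_le h.iIndep Set.isCompl_range_inl_range_inr.disjoint
  refine (Indep_iff _ _ _).1 hind s t (hs fun i => ?_) (ht fun j => ?_)
  exacts [measurable_iff_comap_le.2 (le_iSup (fun i => mβ.comap (f i)) i),
    measurable_iff_comap_le.2 (le_iSup (fun j => mβ.comap (g j)) j)]

theorem sic_hcn_coverage_infinite_general
    {Ω : Type*} [MeasureSpace Ω] [IsProbabilityMeasure (ℙ : Measure Ω)]
    (β θ η : ℝ) (hβ : β ∈ Set.Ioo (0:ℝ) 1) (hθ : 0 < θ) (hη : η ∈ Set.Ioc (0:ℝ) 1)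
    (E : ℕ → Ω → ℝ) (hEmeas : ∀ i, Measurable (E i))
    -- Bernoulli marks: t k = 1 iff the k-th strongest BS is accessible
    (t : ℕ → Ω → ℝ) (htmeas : ∀ k, Measurable (t k))
    (htdist : ∀ k, ℙ {ω | t k ω = 1} = ENNReal.ofReal η)
    -- the E's and t's are jointly independent
    (hindep : iIndepFun (Sum.elim E t) ℙ)
    (hEdist : ∀ i, ∀ x : ℝ, 0 ≤ x → ℙ {ω | x < E i ω} = ENNReal.ofReal (Real.exp (-x)))
    (ξ : ℕ → Ω → ℝ)
    (hξ : ∀ k ω, ξ k ω = (∑ i ∈ Finset.range k, E i ω) ^ (1/β : ℝ))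
    (I : ℕ → Ω → ℝ) (hI : ∀ k ω, I k ω = ∑' j : ℕ, (ξ (k + 1 + j) ω)⁻¹)
    -- I_l^{!k} = Σ_{j ≥ l+1, j ≠ k} ξ_j⁻¹
    (J : ℕ → ℕ → Ω → ℝ)
    (hJ : ∀ l k ω, J l k ω = ∑' j : {j : ℕ // l + 1 ≤ j ∧ j ≠ k}, (ξ j ω)⁻¹)
    (p : ℕ → ℝ)
    (hp : ∀ k, p k = (ℙ {ω | ∀ i, 1 ≤ i → i ≤ k → θ * I i ω < (ξ i ω)⁻¹}).toReal) :
    (ℙ {ω | ∃ l k : ℕ, 1 ≤ k ∧ t k ω = 1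
        ∧ (∀ i, 1 ≤ i → i ≤ l → θ * I i ω < (ξ i ω)⁻¹)
        ∧ θ * J l k ω < (ξ k ω)⁻¹}).toReal
      = ∑' k : ℕ, (1 - η) ^ (k : ℕ) * η * p (k + 1) := by
  obtain rfl := funext₂ hξ
  obtain rfl := funext₂ hI
  obtain rfl := funext₃ hJ
  set a : Ω → ℕ → ℝ := fun ω j => ((∑ i ∈ Finset.range j, E i ω) ^ (1 / β))⁻¹
  set A : ℕ → Set Ω := fun k => {ω | SuccessivelyDecodable θ (a ω) k}
  have hEpos : ∀ᵐ ω, ∀ i, 0 < E i ω := ae_all_iff.2 fun i => by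
    rw [ae_iff_measure_eq (measurableSet_lt measurable_const (hEmeas i)).nullMeasurableSet,
      hEdist i 0 le_rfl, neg_zero, exp_zero, ENNReal.ofReal_one, measure_univ]
  have hevent : {ω | ∃ l k : ℕ, 1 ≤ k ∧ t k ω = 1 ∧ SuccessivelyDecodable θ (a ω) l
        ∧ θ * ∑' j : {j : ℕ // l + 1 ≤ j ∧ j ≠ k}, a ω j < a ω k}
      =ᵐ[ℙ] ⋃ n, A (n + 1) ∩ firstSuccess t n := by
    refine Filter.eventuallyEq_set.2 (hEpos.mono fun ω hω => ?_)
    simp only [Set.mem_ofPred_eq, Set.mem_iUnion, Set.mem_inter_iff, mem_firstSuccess, A]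
    refine (exists_decodable_after_cancellation_iff hθ.le (fun j _ => ?_)
      (antitoneOn_inv_rpow_sum_range hω (one_div_pos.2 hβ.1).le) _).trans
      (exists_iff_exists_first SuccessivelyDecodable.antitone)
    exact inv_nonneg.2 (rpow_nonneg (Finset.sum_nonneg fun i _ => (hω i).le) _)
  have hAm : ∀ {m : MeasurableSpace Ω}, (∀ i, Measurable[m] (E i)) →
      ∀ k, MeasurableSet[m] (A k) :=
    fun hE => measurableSet_successivelyDecodable
      (fun j => ((Finset.measurable_sum _ fun i _ => hE i).pow_const _).inv) θ
  have hsplit : ∀ n, ℙ (A (n + 1) ∩ firstSuccess t n) = ℙ (A (n + 1)) * ℙ (firstSuccess t n) :=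
    fun n => hindep.measure_inter_eq_mul_of_sumElim hEmeas htmeas (hAm · _)
      (measurableSet_firstSuccess · n)
  have hfirst : ∀ n, ℙ (firstSuccess t n) = (1 - ENNReal.ofReal η) ^ n * ENNReal.ofReal η :=
    measure_firstSuccess (hindep.precomp Sum.inr_injective) htmeas htdist
  refine (congrArg ENNReal.toReal (measure_congr hevent)).trans ?_
  rw [measure_iUnion (pairwise_disjoint_firstSuccess.mono fun _ _ h =>
      h.mono Set.inter_subset_right Set.inter_subset_right)
      fun n => (hAm hEmeas _).inter (measurableSet_firstSuccess htmeas n),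
    ENNReal.tsum_toReal_eq fun _ => measure_ne_top _ _]
  refine tsum_congr fun n => ?_
  have hq : 1 - ENNReal.ofReal η = ENNReal.ofReal (1 - η) := by
    rw [ENNReal.ofReal_sub _ hη.1.le, ENNReal.ofReal_one]
  rw [hsplit, hfirst, hq, mul_comm, ENNReal.toReal_mul, ENNReal.toReal_mul, ENNReal.toReal_pow,
    ENNReal.toReal_ofReal (sub_nonneg.2 hη.2), ENNReal.toReal_ofReal hη.1.le, hp]
  rfl

/-- the coverage probability with infinite SIC capability equals
`Σ_{k=1}^∞ (1−η)^{k−1} η p_k`. -/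
theorem sic_hcn_coverage_infinite
    {Ω : Type*} [MeasureSpace Ω] [IsProbabilityMeasure (ℙ : Measure Ω)]
    (β θ η : ℝ) (hβ : β ∈ Set.Ioo (0:ℝ) 1) (hθ : 0 < θ) (hη : η ∈ Set.Ioc (0:ℝ) 1)
    (E : ℕ → Ω → ℝ) (hEmeas : ∀ i, Measurable (E i))
    -- Bernoulli marks: t k = 1 iff the k-th strongest BS is accessible
    (t : ℕ → Ω → ℝ) (htmeas : ∀ k, Measurable (t k))
    (ht01 : ∀ k ω, t k ω = 0 ∨ t k ω = 1)
    (htdist : ∀ k, ℙ {ω | t k ω = 1} = ENNReal.ofReal η)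
    -- the E's and t's are jointly independent
    (hindep : iIndepFun (Sum.elim E t) ℙ)
    (hEdist : ∀ i, ∀ x : ℝ, 0 ≤ x → ℙ {ω | x < E i ω} = ENNReal.ofReal (Real.exp (-x)))
    (ξ : ℕ → Ω → ℝ)
    (hξ : ∀ k ω, ξ k ω = (∑ i ∈ Finset.range k, E i ω) ^ (1/β : ℝ))
    (I : ℕ → Ω → ℝ) (hI : ∀ k ω, I k ω = ∑' j : ℕ, (ξ (k + 1 + j) ω)⁻¹)
    -- I_l^{!k} = Σ_{j ≥ l+1, j ≠ k} ξ_j⁻¹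
    (J : ℕ → ℕ → Ω → ℝ)
    (hJ : ∀ l k ω, J l k ω = ∑' j : {j : ℕ // l + 1 ≤ j ∧ j ≠ k}, (ξ j ω)⁻¹)
    (p : ℕ → ℝ)
    (hp : ∀ k, p k = (ℙ {ω | ∀ i, 1 ≤ i → i ≤ k → θ * I i ω < (ξ i ω)⁻¹}).toReal) :
    (ℙ {ω | ∃ l k : ℕ, 1 ≤ k ∧ t k ω = 1
        ∧ (∀ i, 1 ≤ i → i ≤ l → θ * I i ω < (ξ i ω)⁻¹)
        ∧ θ * J l k ω < (ξ k ω)⁻¹}).toReal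
      = ∑' k : ℕ, (1 - η) ^ (k : ℕ) * η * p (k + 1) :=
  sic_hcn_coverage_infinite_general β θ η hβ hθ hη E hEmeas t htmeas htdist hindep hEdist ξ hξ I hI
    J hJ p hp
end
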